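/- arXiv:math/0203165 — 4 statements merged into one kernel-verified Lean document; each statement's English description precedes it below -/
import Mathlib

section
/- Let u, v, w ∈ k*, z ∈ k and s ∈ k* satisfy 1 − z²u = s²·uv. Then there exists a G_k-group structure ρ on D8 whose associated fields are K₁ = k(√u), K₂ = k(√v) and K = k(√v, √(w(1+z√u)/2), √(w(1−z√u)/2)) (for a square root √u ∈ k̄ of u). -/
open IntermediateField DihedralGroup

noncomputable section

/-- The absolute Galois group of `k`. -/
abbrev Gk (k : Type*) [Field k] := AlgebraicClosure k ≃ₐ[k] AlgebraicClosure k

/-- A `G_k`-group structure on a group `G` : a homomorphism `ρ : G_k → Aut(G)` whose kernel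
contains `Gal(k̄/L)` for some finite Galois extension `L/k` inside `k̄`. -/
def IsGkGroupStructure (k : Type*) [Field k] {G : Type*} [Group G]
    (ρ : Gk k →* MulAut G) : Prop :=
  ∃ L : IntermediateField k (AlgebraicClosure k),
    FiniteDimensional k L ∧ Normal k L ∧ ∀ σ : Gk k, (∀ x ∈ L, σ x = x) → ρ σ = 1

namespace CQaux

def autFun (c d : ZMod 4) : DihedralGroup 4 → DihedralGroup 4
  | .r i => .r (c * i)
  | .sr i => .sr (c * i + d)

lemma autFun_mul (c d : ZMod 4) (x y : DihedralGroup 4) :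
    autFun c d (x * y) = autFun c d x * autFun c d y := by
  cases x <;> cases y <;>
    simp only [autFun, r_mul_r, r_mul_sr, sr_mul_r, sr_mul_sr] <;> congr 1 <;> ring

def aut (c d : ZMod 4) (hc : c * c = 1) : MulAut (DihedralGroup 4) where
  toFun := autFun c d
  invFun := autFun c (-(c * d))
  left_inv x := by
    cases x with
    | r i =>
      show DihedralGroup.r (c * (c * i)) = .r i
      rw [← mul_assoc, hc, one_mul]
    | sr i =>
      show DihedralGroup.sr (c * (c * i + d) + -(c * d)) = .sr i
      have h : c * (c * i + d) + -(c * d) = c * c * i := by ring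
      rw [h, hc, one_mul]
  right_inv x := by
    cases x with
    | r i =>
      show DihedralGroup.r (c * (c * i)) = .r i
      rw [← mul_assoc, hc, one_mul]
    | sr i =>
      show DihedralGroup.sr (c * (c * i + -(c * d)) + d) = .sr i
      have h : c * (c * i + -(c * d)) + d = c * c * i + (1 - c * c) * d := by ring
      rw [h, hc]; ring_nf
  map_mul' := autFun_mul c d

@[simp] lemma aut_apply (c d : ZMod 4) (hc : c * c = 1) (x : DihedralGroup 4) :
    aut c d hc x = autFun c d x := rfl

lemma aut_mul (c₁ d₁ c₂ d₂ : ZMod 4) (h₁ : c₁ * c₁ = 1) (h₂ : c₂ * c₂ = 1) :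
    aut c₁ d₁ h₁ * aut c₂ d₂ h₂ =
      aut (c₁ * c₂) (c₁ * d₂ + d₁) (by rw [mul_mul_mul_comm, h₁, h₂, one_mul]) := by
  ext x
  simp only [MulAut.mul_apply, aut_apply]
  cases x <;> simp only [autFun] <;> congr 1 <;> ring

lemma aut_congr {c₁ d₁ c₂ d₂ : ZMod 4} (h₁ : c₁ * c₁ = 1) (h₂ : c₂ * c₂ = 1)
    (hc : c₁ = c₂) (hd : d₁ = d₂) : aut c₁ d₁ h₁ = aut c₂ d₂ h₂ := by
  subst hc; subst hd; rfl

lemma aut_eq_one_iff (c d : ZMod 4) (hc : c * c = 1) :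
    aut c d hc = 1 ↔ (c = 1 ∧ d = 0) := by
  constructor
  · intro h
    have h1 : autFun c d (.r 1) = .r 1 := by rw [← aut_apply c d hc, h]; rfl
    have h2 : autFun c d (.sr 0) = .sr 0 := by rw [← aut_apply c d hc, h]; rfl
    simp only [autFun, mul_one, mul_zero, zero_add, r.injEq, sr.injEq] at h1 h2
    exact ⟨h1, h2⟩
  · rintro ⟨rfl, rfl⟩
    ext x
    cases x <;> simp [autFun]

lemma aut_cond_iff (c d : ZMod 4) (hc : c * c = 1) :
    (∀ x : DihedralGroup 4, aut c d hc x * x⁻¹ ∈ ({1, r 2} : Set (DihedralGroup 4))) ↔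
      (d = 0 ∨ d = 2) := by
  have hc' : c = 1 ∨ c = 3 := by
    have : ∀ c : ZMod 4, c * c = 1 → c = 1 ∨ c = 3 := by decide
    exact this c hc
  simp only [Set.mem_insert_iff, Set.mem_singleton_iff, aut_apply]
  rcases hc' with rfl | rfl <;> revert d <;> decide

open scoped Classical in
def cOf {k K : Type*} [Field k] [Field K] [Algebra k K] (sv : K) (σ : K ≃ₐ[k] K) : ZMod 4 :=
  if σ sv = sv then 1 else 3

open scoped Classical in
def dOf {k K : Type*} [Field k] [Field K] [Algebra k K] (su a b : K) (σ : K ≃ₐ[k] K) :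
    ZMod 4 :=
  if σ su = su then (if σ a = a then 0 else 2) else (if σ a = b then 1 else 3)

lemma cOf_sq {k K : Type*} [Field k] [Field K] [Algebra k K] (sv : K) (σ : K ≃ₐ[k] K) :
    cOf sv σ * cOf sv σ = 1 := by
  unfold cOf; split <;> decide

end CQaux

/-- Lemma 2, converse half, of Cardona–Quer.
Given `u, v, w ∈ k*`, `z ∈ k`, `s ∈ k*` with `1 − z²u = s²·uv`, there is a `G_k`-group
structure `ρ` on `D8` (realized as `DihedralGroup 4`, with `U = sr 0`, `V = r 1`)
whose fields of definition are `K₁ = k(√u)`, `K₂ = k(√v)` and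
`K = k(√v, √(w(1+z√u)/2), √(w(1−z√u)/2))`.
Field equalities between fixed fields are expressed, via the Galois correspondence, as
equalities of the corresponding subgroups of `G_k`. -/
theorem exists_D8_structure_of_z_s_w {k : Type*} [Field k] [PerfectField k]
    (hchar : (2 : k) ≠ 0)
    (u v w : k) (hu : u ≠ 0) (hv : v ≠ 0) (hw : w ≠ 0)
    (z s : k) (hs : s ≠ 0) (hid : 1 - z ^ 2 * u = s ^ 2 * (u * v))
    (su : AlgebraicClosure k)
    (hsu : su ^ 2 = algebraMap k (AlgebraicClosure k) u) :
    ∃ ρ : Gk k →* MulAut (DihedralGroup 4), IsGkGroupStructure k ρ ∧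
      ∃ sv a b : AlgebraicClosure k,
        sv ^ 2 = algebraMap k (AlgebraicClosure k) v ∧
        a ^ 2 = algebraMap k (AlgebraicClosure k) w *
          (1 + algebraMap k (AlgebraicClosure k) z * su) / 2 ∧
        b ^ 2 = algebraMap k (AlgebraicClosure k) w *
          (1 - algebraMap k (AlgebraicClosure k) z * su) / 2 ∧
        -- `K₁ = k(√u)`:
        (∀ σ : Gk k,
          (∀ a : DihedralGroup 4, ρ σ a * a⁻¹ ∈ ({1, r 2} : Set (DihedralGroup 4))) ↔
            σ su = su) ∧
        -- `K₂ = k(√v)`: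
        (∀ σ : Gk k, ρ σ (r 1) = r 1 ↔ σ sv = sv) ∧
        -- `K = k(√v, √(w(1+z√u)/2), √(w(1−z√u)/2))`:
        (∀ σ : Gk k, ρ σ = 1 ↔ (σ sv = sv ∧ σ a = a ∧ σ b = b)) := by
  classical
  have inj : Function.Injective (algebraMap k (AlgebraicClosure k)) := (algebraMap k (AlgebraicClosure k)).injective
  have two_ne : (2 : AlgebraicClosure k) ≠ 0 := by
    intro h
    apply hchar
    apply inj
    rw [map_ofNat, map_zero, h]
  have hU : algebraMap k (AlgebraicClosure k) u ≠ 0 := fun h => hu (inj (by rw [h, map_zero]))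
  have hV : algebraMap k (AlgebraicClosure k) v ≠ 0 := fun h => hv (inj (by rw [h, map_zero]))
  have hW : algebraMap k (AlgebraicClosure k) w ≠ 0 := fun h => hw (inj (by rw [h, map_zero]))
  have hS : algebraMap k (AlgebraicClosure k) s ≠ 0 := fun h => hs (inj (by rw [h, map_zero]))
  have hidF : (1 : AlgebraicClosure k) - (algebraMap k (AlgebraicClosure k) z) ^ 2 * algebraMap k (AlgebraicClosure k) u =
      (algebraMap k (AlgebraicClosure k) s) ^ 2 * (algebraMap k (AlgebraicClosure k) u * algebraMap k (AlgebraicClosure k) v) := by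
    have := congrArg (algebraMap k (AlgebraicClosure k)) hid
    simpa only [map_sub, map_mul, map_pow, map_one] using this
  obtain ⟨sv, hsv⟩ := IsAlgClosed.exists_pow_nat_eq (algebraMap k (AlgebraicClosure k) v) (n := 2) two_pos
  obtain ⟨a, ha⟩ := IsAlgClosed.exists_pow_nat_eq
    (algebraMap k (AlgebraicClosure k) w * (1 + algebraMap k (AlgebraicClosure k) z * su) / 2) (n := 2) two_pos
  have hsu0 : su ≠ 0 := by
    intro h
    apply hU
    rw [← hsu, h]; ring
  have hsv0 : sv ≠ 0 := by
    intro h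
    apply hV
    rw [← hsv, h]; ring
  have honeadd : (1 : AlgebraicClosure k) + algebraMap k (AlgebraicClosure k) z * su ≠ 0 := by
    intro h
    have hprod : ((1 : AlgebraicClosure k) - algebraMap k (AlgebraicClosure k) z * su) * ((1 : AlgebraicClosure k) + algebraMap k (AlgebraicClosure k) z * su) =
        (algebraMap k (AlgebraicClosure k) s) ^ 2 * (algebraMap k (AlgebraicClosure k) u * algebraMap k (AlgebraicClosure k) v) := by
      linear_combination hidF - (algebraMap k (AlgebraicClosure k) z) ^ 2 * hsu
    rw [h, mul_zero] at hprod
    exact (mul_ne_zero (pow_ne_zero 2 hS) (mul_ne_zero hU hV)) hprod.symm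
  have ha0 : a ≠ 0 := by
    intro h
    have h2 : a ^ 2 = 0 := by rw [h]; ring
    rw [ha] at h2
    exact (div_ne_zero (mul_ne_zero hW honeadd) two_ne) h2
  -- definition of b
  set b : AlgebraicClosure k := algebraMap k (AlgebraicClosure k) w * algebraMap k (AlgebraicClosure k) s * su * sv / (2 * a) with hbdef
  have hab : 2 * a * b = algebraMap k (AlgebraicClosure k) w * algebraMap k (AlgebraicClosure k) s * su * sv := by
    rw [hbdef]; field_simp
  have ha2 : 2 * a ^ 2 = algebraMap k (AlgebraicClosure k) w * (1 + algebraMap k (AlgebraicClosure k) z * su) := by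
    rw [ha]; field_simp
  have hb : b ^ 2 = algebraMap k (AlgebraicClosure k) w * (1 - algebraMap k (AlgebraicClosure k) z * su) / 2 := by
    have h4 : (2 * a * b) ^ 2 = (algebraMap k (AlgebraicClosure k) w * algebraMap k (AlgebraicClosure k) s * su * sv) ^ 2 := by
      rw [hab]
    have key : (algebraMap k (AlgebraicClosure k) w * (1 + algebraMap k (AlgebraicClosure k) z * su)) * (2 * b ^ 2) =
        (algebraMap k (AlgebraicClosure k) w * (1 + algebraMap k (AlgebraicClosure k) z * su)) *
          (algebraMap k (AlgebraicClosure k) w * (1 - algebraMap k (AlgebraicClosure k) z * su)) := by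
      linear_combination h4 - 2 * b ^ 2 * ha2 +
        (algebraMap k (AlgebraicClosure k) w) ^ 2 * (algebraMap k (AlgebraicClosure k) s) ^ 2 * sv ^ 2 * hsu +
        (algebraMap k (AlgebraicClosure k) w) ^ 2 * (algebraMap k (AlgebraicClosure k) s) ^ 2 * algebraMap k (AlgebraicClosure k) u * hsv -
        (algebraMap k (AlgebraicClosure k) w) ^ 2 * hidF +
        (algebraMap k (AlgebraicClosure k) w) ^ 2 * (algebraMap k (AlgebraicClosure k) z) ^ 2 * hsu
    have key2 := mul_left_cancel₀ (mul_ne_zero hW honeadd) key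
    rw [eq_div_iff two_ne]
    linear_combination key2
  have hone' : (1 : AlgebraicClosure k) - algebraMap k (AlgebraicClosure k) z * su ≠ 0 := by
    intro h2
    have hprod : ((1 : AlgebraicClosure k) - algebraMap k (AlgebraicClosure k) z * su) * ((1 : AlgebraicClosure k) + algebraMap k (AlgebraicClosure k) z * su) =
        (algebraMap k (AlgebraicClosure k) s) ^ 2 * (algebraMap k (AlgebraicClosure k) u * algebraMap k (AlgebraicClosure k) v) := by
      linear_combination hidF - (algebraMap k (AlgebraicClosure k) z) ^ 2 * hsu
    rw [h2, zero_mul] at hprod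
    exact (mul_ne_zero (pow_ne_zero 2 hS) (mul_ne_zero hU hV)) hprod.symm
  have hb0 : b ≠ 0 := by
    intro h
    have h2 : b ^ 2 = 0 := by rw [h]; ring
    rw [hb] at h2
    exact (div_ne_zero (mul_ne_zero hW hone') two_ne) h2
  -- negation inequalities
  have hneg : ∀ x : AlgebraicClosure k, x ≠ 0 → ¬(-x = x) := by
    intro x hx h
    apply hx
    have h2 : (2 : AlgebraicClosure k) * x = 0 := by linear_combination -h
    exact (mul_eq_zero.mp h2).resolve_left two_ne
  have hna := hneg a ha0
  have hnb := hneg b hb0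
  have hnsu := hneg su hsu0
  have hnsv := hneg sv hsv0
  -- square-root dichotomy
  have sqc : ∀ x y : AlgebraicClosure k, x ^ 2 = y ^ 2 → x = y ∨ x = -y := by
    intro x y h
    have h0 : (x - y) * (x + y) = 0 := by linear_combination h
    rcases mul_eq_zero.mp h0 with h' | h'
    · exact Or.inl (sub_eq_zero.mp h')
    · exact Or.inr (eq_neg_of_add_eq_zero_left h')
  have hvb : ∀ σ : Gk k, σ sv = sv ∨ σ sv = -sv := by
    intro σ
    refine sqc _ _ ?_
    rw [← map_pow, hsv, AlgEquiv.commutes]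
  have hbranch : ∀ σ : Gk k,
      (σ su = su ∧ (σ a = a ∨ σ a = -a)) ∨ (σ su = -su ∧ (σ a = b ∨ σ a = -b)) := by
    intro σ
    have hsu2 : (σ su) ^ 2 = su ^ 2 := by
      rw [← map_pow, hsu, AlgEquiv.commutes]
    rcases sqc _ _ hsu2 with h | h
    · left
      refine ⟨h, sqc _ _ ?_⟩
      have h3 : σ (a ^ 2) = a ^ 2 := by
        rw [ha]
        simp only [map_div₀, map_mul, map_add, map_one, AlgEquiv.commutes, map_ofNat, h]
      rwa [map_pow] at h3
    · right
      refine ⟨h, sqc _ _ ?_⟩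
      have h3 : σ (a ^ 2) = b ^ 2 := by
        rw [ha, hb]
        simp only [map_div₀, map_mul, map_add, map_one, AlgEquiv.commutes, map_ofNat, h]
        ring
      rwa [map_pow] at h3
  have hsb : ∀ σ : Gk k, 2 * σ a * σ b =
      algebraMap k (AlgebraicClosure k) w * algebraMap k (AlgebraicClosure k) s * σ su * σ sv := by
    intro σ
    have h := congrArg σ hab
    simpa only [map_mul, map_ofNat, AlgEquiv.commutes] using h
  -- multiplicativity of cOf
  have hcmul : ∀ σ τ : Gk k, CQaux.cOf sv (σ * τ) = CQaux.cOf sv σ * CQaux.cOf sv τ := by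
    intro σ τ
    rcases hvb σ with h1 | h1 <;> rcases hvb τ with h2 | h2 <;>
      simp only [CQaux.cOf, AlgEquiv.mul_apply, h2, map_neg, h1, neg_neg,
        eq_self_iff_true, if_true, hnsv, if_false, ite_true, ite_false] <;> decide
  -- cocycle property of dOf
  have hdmul : ∀ σ τ : Gk k,
      CQaux.dOf su a b (σ * τ) = CQaux.cOf sv σ * CQaux.dOf su a b τ + CQaux.dOf su a b σ := by
    intro σ τ
    rcases hbranch σ with ⟨hσu, hσa | hσa⟩ | ⟨hσu, hσa | hσa⟩ <;> rcases hvb σ with hσv | hσv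
    · -- σ a = a, σ sv = sv : σ b = b
      have hσb : σ b = b := by
        have h := hsb σ; rw [hσu, hσa, hσv] at h
        apply mul_left_cancel₀ (mul_ne_zero two_ne ha0)
        linear_combination h - hab
      rcases hbranch τ with ⟨hτu, hτa | hτa⟩ | ⟨hτu, hτa | hτa⟩ <;>
        simp only [CQaux.dOf, CQaux.cOf, AlgEquiv.mul_apply, hτu, hτa, map_neg, hσu, hσa, hσv,
          hσb, neg_neg, eq_self_iff_true, if_true, hna, hnb, hnsu, hnsv, if_false,
          ite_true, ite_false] <;> decide
    · -- σ a = a, σ sv = -sv : σ b = -b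
      have hσb : σ b = -b := by
        have h := hsb σ; rw [hσu, hσa, hσv] at h
        apply mul_left_cancel₀ (mul_ne_zero two_ne ha0)
        linear_combination h + hab
      rcases hbranch τ with ⟨hτu, hτa | hτa⟩ | ⟨hτu, hτa | hτa⟩ <;>
        simp only [CQaux.dOf, CQaux.cOf, AlgEquiv.mul_apply, hτu, hτa, map_neg, hσu, hσa, hσv,
          hσb, neg_neg, eq_self_iff_true, if_true, hna, hnb, hnsu, hnsv, if_false,
          ite_true, ite_false] <;> decide
    · -- σ a = -a, σ sv = sv : σ b = -b
      have hσb : σ b = -b := by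
        have h := hsb σ; rw [hσu, hσa, hσv] at h
        apply mul_left_cancel₀ (mul_ne_zero two_ne ha0)
        linear_combination -h + hab
      rcases hbranch τ with ⟨hτu, hτa | hτa⟩ | ⟨hτu, hτa | hτa⟩ <;>
        simp only [CQaux.dOf, CQaux.cOf, AlgEquiv.mul_apply, hτu, hτa, map_neg, hσu, hσa, hσv,
          hσb, neg_neg, eq_self_iff_true, if_true, hna, hnb, hnsu, hnsv, if_false,
          ite_true, ite_false] <;> decide
    · -- σ a = -a, σ sv = -sv : σ b = b
      have hσb : σ b = b := by
        have h := hsb σ; rw [hσu, hσa, hσv] at h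
        apply mul_left_cancel₀ (mul_ne_zero two_ne ha0)
        linear_combination -h - hab
      rcases hbranch τ with ⟨hτu, hτa | hτa⟩ | ⟨hτu, hτa | hτa⟩ <;>
        simp only [CQaux.dOf, CQaux.cOf, AlgEquiv.mul_apply, hτu, hτa, map_neg, hσu, hσa, hσv,
          hσb, neg_neg, eq_self_iff_true, if_true, hna, hnb, hnsu, hnsv, if_false,
          ite_true, ite_false] <;> decide
    · -- σ a = b, σ sv = sv : σ b = -a
      have hσb : σ b = -a := by
        have h := hsb σ; rw [hσu, hσa, hσv] at h
        apply mul_left_cancel₀ (mul_ne_zero two_ne hb0)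
        linear_combination h + hab
      rcases hbranch τ with ⟨hτu, hτa | hτa⟩ | ⟨hτu, hτa | hτa⟩ <;>
        simp only [CQaux.dOf, CQaux.cOf, AlgEquiv.mul_apply, hτu, hτa, map_neg, hσu, hσa, hσv,
          hσb, neg_neg, eq_self_iff_true, if_true, hna, hnb, hnsu, hnsv, if_false,
          ite_true, ite_false] <;> decide
    · -- σ a = b, σ sv = -sv : σ b = a
      have hσb : σ b = a := by
        have h := hsb σ; rw [hσu, hσa, hσv] at h
        apply mul_left_cancel₀ (mul_ne_zero two_ne hb0)
        linear_combination h - hab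
      rcases hbranch τ with ⟨hτu, hτa | hτa⟩ | ⟨hτu, hτa | hτa⟩ <;>
        simp only [CQaux.dOf, CQaux.cOf, AlgEquiv.mul_apply, hτu, hτa, map_neg, hσu, hσa, hσv,
          hσb, neg_neg, eq_self_iff_true, if_true, hna, hnb, hnsu, hnsv, if_false,
          ite_true, ite_false] <;> decide
    · -- σ a = -b, σ sv = sv : σ b = a
      have hσb : σ b = a := by
        have h := hsb σ; rw [hσu, hσa, hσv] at h
        apply mul_left_cancel₀ (mul_ne_zero two_ne hb0)
        linear_combination -h - hab
      rcases hbranch τ with ⟨hτu, hτa | hτa⟩ | ⟨hτu, hτa | hτa⟩ <;>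
        simp only [CQaux.dOf, CQaux.cOf, AlgEquiv.mul_apply, hτu, hτa, map_neg, hσu, hσa, hσv,
          hσb, neg_neg, eq_self_iff_true, if_true, hna, hnb, hnsu, hnsv, if_false,
          ite_true, ite_false] <;> decide
    · -- σ a = -b, σ sv = -sv : σ b = -a
      have hσb : σ b = -a := by
        have h := hsb σ; rw [hσu, hσa, hσv] at h
        apply mul_left_cancel₀ (mul_ne_zero two_ne hb0)
        linear_combination -h + hab
      rcases hbranch τ with ⟨hτu, hτa | hτa⟩ | ⟨hτu, hτa | hτa⟩ <;>
        simp only [CQaux.dOf, CQaux.cOf, AlgEquiv.mul_apply, hτu, hτa, map_neg, hσu, hσa, hσv,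
          hσb, neg_neg, eq_self_iff_true, if_true, hna, hnb, hnsu, hnsv, if_false,
          ite_true, ite_false] <;> decide
  -- the homomorphism ρ
  set ρ : Gk k →* MulAut (DihedralGroup 4) :=
    { toFun := fun σ => CQaux.aut (CQaux.cOf sv σ) (CQaux.dOf su a b σ) (CQaux.cOf_sq sv σ)
      map_one' := by
        have c1 : CQaux.cOf sv (1 : Gk k) = 1 := by simp [CQaux.cOf]
        have d1 : CQaux.dOf su a b (1 : Gk k) = 0 := by simp [CQaux.dOf]
        exact (CQaux.aut_eq_one_iff _ _ _).mpr ⟨c1, d1⟩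
      map_mul' := by
        intro σ τ
        show CQaux.aut (CQaux.cOf sv (σ * τ)) (CQaux.dOf su a b (σ * τ))
          (CQaux.cOf_sq sv (σ * τ)) = _
        rw [CQaux.aut_mul]
        exact CQaux.aut_congr _ _ (hcmul σ τ) (hdmul σ τ) } with hρdef
  have hρ : ∀ σ : Gk k,
      ρ σ = CQaux.aut (CQaux.cOf sv σ) (CQaux.dOf su a b σ) (CQaux.cOf_sq sv σ) := fun _ => rfl
  -- the field K equivalence expressed in terms of (cOf, dOf)
  have hKeq : ∀ σ : Gk k, (CQaux.cOf sv σ = 1 ∧ CQaux.dOf su a b σ = 0) ↔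
      (σ sv = sv ∧ σ a = a ∧ σ b = b) := by
    intro σ
    constructor
    · rintro ⟨hc, hd⟩
      have hσv : σ sv = sv := by
        by_contra h
        simp only [CQaux.cOf, h, if_false, ite_false] at hc
        exact absurd hc (by decide)
      have hσu : σ su = su := by
        by_contra h
        simp only [CQaux.dOf, h, if_false, ite_false] at hd
        revert hd; split <;> decide
      have hσa : σ a = a := by
        by_contra h
        simp only [CQaux.dOf, hσu, h, eq_self_iff_true, if_true, if_false,
          ite_true, ite_false] at hd
        exact absurd hd (by decide)
      refine ⟨hσv, hσa, ?_⟩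
      have h := hsb σ
      rw [hσu, hσa, hσv] at h
      apply mul_left_cancel₀ (mul_ne_zero two_ne ha0)
      linear_combination h - hab
    · rintro ⟨hσv, hσa, hσb⟩
      have hσu : σ su = su := by
        have h := hsb σ
        rw [hσa, hσb, hσv] at h
        have h2 : (algebraMap k (AlgebraicClosure k) w * algebraMap k (AlgebraicClosure k) s * sv) * σ su =
            (algebraMap k (AlgebraicClosure k) w * algebraMap k (AlgebraicClosure k) s * sv) * su := by
          linear_combination -h + hab
        exact mul_left_cancel₀ (mul_ne_zero (mul_ne_zero hW hS) hsv0) h2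
      constructor
      · simp [CQaux.cOf, hσv]
      · simp [CQaux.dOf, hσu, hσa]
  refine ⟨ρ, ?_, sv, a, b, hsv, ha, hb, ?_, ?_, ?_⟩
  · -- IsGkGroupStructure
    have hint : ∀ x ∈ ({sv, a, b} : Set (AlgebraicClosure k)), IsIntegral k x := by
      intro x _
      exact Algebra.IsIntegral.isIntegral x
    haveI : FiniteDimensional k (IntermediateField.adjoin k ({sv, a, b} : Set (AlgebraicClosure k))) :=
      IntermediateField.finiteDimensional_adjoin hint
    refine ⟨normalClosure k (IntermediateField.adjoin k ({sv, a, b} : Set (AlgebraicClosure k))) (AlgebraicClosure k),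
      inferInstance, inferInstance, ?_⟩
    intro σ hfix
    have hsub := IntermediateField.le_normalClosure (IntermediateField.adjoin k ({sv, a, b} : Set (AlgebraicClosure k)))
    have hsv' : σ sv = sv := hfix sv (hsub (IntermediateField.subset_adjoin k _ (by simp)))
    have ha' : σ a = a := hfix a (hsub (IntermediateField.subset_adjoin k _ (by simp)))
    have hb' : σ b = b := hfix b (hsub (IntermediateField.subset_adjoin k _ (by simp)))
    obtain ⟨hc, hd⟩ := (hKeq σ).mpr ⟨hsv', ha', hb'⟩
    rw [hρ, CQaux.aut_eq_one_iff]
    exact ⟨hc, hd⟩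
  · -- K₁
    intro σ
    rw [hρ, CQaux.aut_cond_iff]
    constructor
    · intro hd
      by_contra h
      simp only [CQaux.dOf, h, if_false, ite_false] at hd
      revert hd; split <;> decide
    · intro h
      simp only [CQaux.dOf, h, eq_self_iff_true, if_true, ite_true]
      split
      · exact Or.inl rfl
      · exact Or.inr rfl
  · -- K₂
    intro σ
    rw [hρ]
    simp only [CQaux.aut_apply, CQaux.autFun, mul_one, r.injEq]
    simp only [CQaux.cOf]
    split_ifs with h
    · simp [h]
    · simp only [h, iff_false]
      decide
  · -- K
    intro σ
    rw [hρ, CQaux.aut_eq_one_iff]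
    exact hKeq σ

end
end

section
/- Let u, v ∈ k*, z ∈ k and s ∈ k* satisfy 1 − z²u = s²·uv. Fix square roots √u, √v ∈ k̄ and elements α, β ∈ k̄ with α² = (1−z√u)/2 and β² = v(1+z√u)/2. Then the matrices U = [[α, β],[β/v, −α]] and V = [[0, −√v],[1/√v, 0]] are invertible, and they generate a subgroup of GL₂(k̄) of order 8 isomorphic to the dihedral group D8 which is stable under the entrywise action of G_k. -/
open Matrix

noncomputable section

/-- The entrywise Galois action on `GL₂(k̄)`, as a homomorphism to automorphisms. -/
def galHom (k : Type*) [Field k] :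
    Gk k →* MulAut (GL (Fin 2) (AlgebraicClosure k)) where
  toFun σ := Units.mapEquiv σ.mapMatrix.toRingEquiv.toMulEquiv
  map_one' := by
    ext M i j
    simp [AlgEquiv.mapMatrix_apply]
  map_mul' σ τ := by
    ext M i j
    simp [AlgEquiv.mapMatrix_apply]

/-!
`U² = 1`, `V² = -1` and `(UV)² = 1`, while `det U = -1 ≠ 1 = det V` puts `U` outside `⟨V⟩`;
so `r 1 ↦ V`, `sr 0 ↦ U` is an isomorphism from `D₄` onto `⟨U, V⟩ = {±1, ±V, ±U, ±UV}`.

For `σ ∈ G_k`, `σ√v = ±√v` gives `σV = ±V`. The relation `1 - z²u = s²uv` makes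
`(αβ)² = (s v √u / 2)²`, so `σ(αβ) = ±αβ` with the sign of `σ√u = ±√u`. Comparing `(σα)²` with
`α²`, resp. with `(β/√v)²`, the pair `(σα, σβ)` is `±(α, β)` or `±(β/√v, -α√v)`, i.e.
`σU = ±U` or `σU = ±UV`.
-/

lemma neg_one_ne_one_of_two_ne_zero {R : Type*} [CommRing R] (h2 : (2 : R) ≠ 0) : (-1 : R) ≠ 1 :=
  fun h => h2 (by linear_combination -h)

lemma eq_and_eq_or_eq_neg_and_eq_neg {R : Type*} [CommRing R] [IsDomain R] {x y a b : R}
    (hx : x ^ 2 = a ^ 2) (hxy : x * y = a * b) (ha : a ≠ 0) :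
    x = a ∧ y = b ∨ x = -a ∧ y = -b := by
  rcases sq_eq_sq_iff_eq_or_eq_neg.1 hx with rfl | rfl
  · exact Or.inl ⟨rfl, mul_left_cancel₀ ha hxy⟩
  · exact Or.inr ⟨rfl, mul_left_cancel₀ ha (by linear_combination -hxy)⟩

lemma RingHom.map_eq_mul_of_sq_eq_sq {R : Type*} [CommRing R] [NoZeroDivisors R] (σ : R →+* R)
    {c d t : R} (hc : c ^ 2 = d ^ 2) (hd : σ d = t * d) : σ c = t * c := by
  rcases sq_eq_sq_iff_eq_or_eq_neg.1 hc with rfl | rfl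
  · exact hd
  · rw [map_neg, hd, mul_neg]

namespace DihedralGroup

variable {G : Type*} [Group G] {n : ℕ} [NeZero n] {a b : G}

lemma mul_pow_mul_self_of_mul_sq (ha : a ^ 2 = 1) (hab : (a * b) ^ 2 = 1) (k : ℕ) :
    a * b ^ k * a = (b ^ k)⁻¹ := by
  have ha' : a⁻¹ = a := inv_eq_of_mul_eq_one_left (by rw [← sq, ha])
  have hconj : a * b * a⁻¹ = b⁻¹ := by
    rw [ha', eq_inv_iff_mul_eq_one, mul_assoc, ← sq, hab]
  have h := conj_pow (a := a) (b := b) (i := k)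
  rwa [hconj, ha', inv_pow, eq_comm] at h

def lift (hb : b ^ n = 1) (ha : a ^ 2 = 1) (hab : (a * b) ^ 2 = 1) : DihedralGroup n →* G where
  toFun
    | r i => b ^ i.val
    | sr i => a * b ^ i.val
  map_one' := by
    rw [one_def]
    exact (congrArg (b ^ ·) ZMod.val_zero).trans (pow_zero b)
  map_mul' := by
    have hpow (i j : ZMod n) : b ^ (i + j).val = b ^ i.val * b ^ j.val := by
      rw [ZMod.val_add, ← pow_eq_pow_mod _ hb, pow_add]
    have hconj (i : ZMod n) : a * b ^ i.val * a = b ^ (-i).val := by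
      rw [mul_pow_mul_self_of_mul_sq ha hab, eq_comm, eq_inv_iff_mul_eq_one, ← hpow,
        neg_add_cancel, ZMod.val_zero, pow_zero]
    have ha' : a * a = 1 := by rw [← sq, ha]
    rintro (i | i) (j | j)
    · simp only [r_mul_r, hpow]
    · simp only [r_mul_sr, sub_eq_neg_add, hpow, ← hconj, ← mul_assoc, ha', one_mul]
    · simp only [sr_mul_r, hpow, mul_assoc]
    · simp only [sr_mul_sr, sub_eq_neg_add, hpow, ← hconj, mul_assoc]

section Lift

variable (hb : b ^ n = 1) (ha : a ^ 2 = 1) (hab : (a * b) ^ 2 = 1)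

@[simp] lemma lift_r (i : ZMod n) : lift hb ha hab (r i) = b ^ i.val := rfl

@[simp] lemma lift_sr (i : ZMod n) : lift hb ha hab (sr i) = a * b ^ i.val := rfl

lemma lift_injective (hb_order : orderOf b = n) (ha_nmem : a ∉ Subgroup.zpowers b) :
    Function.Injective (lift hb ha hab) := by
  rw [injective_iff_map_eq_one]
  rintro (i | i) h
  all_goals simp only [lift_r, lift_sr] at h
  · have hdvd : orderOf b ∣ i.val := orderOf_dvd_of_pow_eq_one h
    rw [hb_order] at hdvd
    rw [(ZMod.val_eq_zero i).1 (Nat.eq_zero_of_dvd_of_lt hdvd (ZMod.val_lt i)), r_zero]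
  · refine absurd ?_ ha_nmem
    rw [eq_inv_of_mul_eq_one_left h]
    exact inv_mem (pow_mem (Subgroup.mem_zpowers b) _)

lemma range_lift : (lift hb ha hab).range = Subgroup.closure {a, b} := by
  have ha_mem : a ∈ Subgroup.closure {a, b} := Subgroup.subset_closure (by simp)
  have hb_mem : b ∈ Subgroup.closure {a, b} := Subgroup.subset_closure (by simp)
  apply le_antisymm
  · rintro _ ⟨i | i, rfl⟩
    · exact pow_mem hb_mem _
    · exact mul_mem ha_mem (pow_mem hb_mem _)
  · rw [Subgroup.closure_le, Set.insert_subset_iff, Set.singleton_subset_iff]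
    refine ⟨⟨sr 0, by simp⟩, ⟨r 1, ?_⟩⟩
    rw [lift_r, ZMod.val_one_eq_one_mod, ← pow_eq_pow_mod _ hb, pow_one]

end Lift

theorem nonempty_mulEquiv_closure (ha : a ^ 2 = 1) (hab : (a * b) ^ 2 = 1)
    (hb_order : orderOf b = n) (ha_nmem : a ∉ Subgroup.zpowers b) :
    Nonempty (Subgroup.closure {a, b} ≃* DihedralGroup n) := by
  have hb_pow : b ^ n = 1 := hb_order ▸ pow_orderOf_eq_one b
  exact ⟨((MonoidHom.ofInjective (lift_injective hb_pow ha hab hb_order ha_nmem)).trans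
    (MulEquiv.subgroupCongr (range_lift hb_pow ha hab))).symm⟩

end DihedralGroup

section Matrices

variable {K : Type*} [Field K]

def reflMatrix (v a b : K) : Matrix (Fin 2) (Fin 2) K := !![a, b; b / v, -a]

def rotMatrix (w : K) : Matrix (Fin 2) (Fin 2) K := !![0, -w; 1 / w, 0]

lemma reflMatrix_mul_self (v a b : K) :
    reflMatrix v a b * reflMatrix v a b = (a ^ 2 + b ^ 2 / v) • 1 := by
  ext i j; fin_cases i <;> fin_cases j <;> simp [reflMatrix] <;> ring

lemma det_reflMatrix (v a b : K) : (reflMatrix v a b).det = -(a ^ 2 + b ^ 2 / v) := by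
  simp [reflMatrix, det_fin_two_of]; ring

lemma rotMatrix_mul_self {w : K} (hw : w ≠ 0) : rotMatrix w * rotMatrix w = -1 := by
  ext i j; fin_cases i <;> fin_cases j <;> simp [rotMatrix, hw]

lemma det_rotMatrix {w : K} (hw : w ≠ 0) : (rotMatrix w).det = 1 := by
  simp [rotMatrix, det_fin_two_of, hw]

lemma reflMatrix_mul_rotMatrix {v w : K} (hw : w ^ 2 = v) (a b : K) :
    reflMatrix v a b * rotMatrix w = reflMatrix v (b / w) (-(a * w)) := by
  subst hw
  ext i j; fin_cases i <;> fin_cases j <;> simp [reflMatrix, rotMatrix] <;> field_simp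

lemma reflMatrix_neg (v a b : K) : reflMatrix v (-a) (-b) = -reflMatrix v a b := by
  ext i j; fin_cases i <;> fin_cases j <;> simp [reflMatrix, neg_div]

lemma rotMatrix_neg (w : K) : rotMatrix (-w) = -rotMatrix w := by
  ext i j; fin_cases i <;> fin_cases j <;> simp [rotMatrix]

lemma map_reflMatrix {L : Type*} [Field L] (σ : K →+* L) (v a b : K) :
    (reflMatrix v a b).map σ = reflMatrix (σ v) (σ a) (σ b) := by
  ext i j; fin_cases i <;> fin_cases j <;> simp [reflMatrix]

lemma map_rotMatrix {L : Type*} [Field L] (σ : K →+* L) (w : K) :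
    (rotMatrix w).map σ = rotMatrix (σ w) := by
  ext i j; fin_cases i <;> fin_cases j <;> simp [rotMatrix]

end Matrices

section GeneralLinearGroup

variable {K : Type*} [Field K] {v w α β : K} {U V : GL (Fin 2) K}

lemma sq_eq_one_of_val_eq_reflMatrix (hnorm : α ^ 2 + β ^ 2 / v = 1)
    (hU : (U : Matrix (Fin 2) (Fin 2) K) = reflMatrix v α β) : U ^ 2 = 1 := Units.ext <| by
  rw [Units.val_pow_eq_pow_val, hU, sq, reflMatrix_mul_self, hnorm, one_smul, Units.val_one]

lemma sq_eq_neg_one_of_val_eq_rotMatrix (hV : (V : Matrix (Fin 2) (Fin 2) K) = rotMatrix w)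
    (hw0 : w ≠ 0) : V ^ 2 = -1 := Units.ext <| by
  rw [Units.val_pow_eq_pow_val, hV, sq, rotMatrix_mul_self hw0, Units.val_neg, Units.val_one]

theorem nonempty_mulEquiv_closure_of_val_eq (h2 : (2 : K) ≠ 0) (hw : w ^ 2 = v) (hw0 : w ≠ 0)
    (hnorm : α ^ 2 + β ^ 2 / v = 1) (hU : (U : Matrix (Fin 2) (Fin 2) K) = reflMatrix v α β)
    (hV : (V : Matrix (Fin 2) (Fin 2) K) = rotMatrix w) :
    Nonempty (Subgroup.closure {U, V} ≃* DihedralGroup 4) := by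
  have hneg : (-1 : GL (Fin 2) K) ≠ 1 := fun h =>
    neg_one_ne_one_of_two_ne_zero h2 <| by
      simpa using congrArg (fun M : GL (Fin 2) K => (M : Matrix (Fin 2) (Fin 2) K) 0 0) h
  have hV_order : orderOf V = 4 := by
    refine orderOf_eq_prime_pow (p := 2) (n := 1) ?_ ?_
    · rwa [pow_one, sq_eq_neg_one_of_val_eq_rotMatrix hV hw0]
    · rw [pow_succ, pow_one, pow_mul, sq_eq_neg_one_of_val_eq_rotMatrix hV hw0]
      simp
  have hnorm' : (β / w) ^ 2 + (-(α * w)) ^ 2 / v = 1 := by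
    rw [← hnorm, ← hw]; field_simp; ring
  have hUV_sq : (U * V) ^ 2 = 1 := Units.ext <| by
    rw [Units.val_pow_eq_pow_val, Units.val_mul, hU, hV, reflMatrix_mul_rotMatrix hw, sq,
      reflMatrix_mul_self, hnorm', one_smul, Units.val_one]
  have hU_nmem : U ∉ Subgroup.zpowers V := by
    rintro ⟨k, hk⟩
    have hdet := congrArg (fun M => (Matrix.GeneralLinearGroup.det M : K)) hk
    simp only [map_zpow, Units.val_zpow_eq_zpow_val, GeneralLinearGroup.val_det_apply, hU, hV,
      det_rotMatrix hw0, _root_.one_zpow, det_reflMatrix, hnorm] at hdet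
    exact neg_one_ne_one_of_two_ne_zero h2 hdet.symm
  exact DihedralGroup.nonempty_mulEquiv_closure (sq_eq_one_of_val_eq_reflMatrix hnorm hU) hUV_sq
    hV_order hU_nmem

end GeneralLinearGroup

section Galois

variable {K : Type*} [Field K] {v : K}

lemma map_reflMatrix_eq_or_eq_neg (σ : K →+* K) (hv : σ v = v) {a b a' b' : K}
    (ha : σ a ^ 2 = a' ^ 2) (hab : σ a * σ b = a' * b') (ha' : a' ≠ 0) :
    (reflMatrix v a b).map σ = reflMatrix v a' b' ∨
      (reflMatrix v a b).map σ = -reflMatrix v a' b' := by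
  rw [map_reflMatrix, hv, ← reflMatrix_neg]
  rcases eq_and_eq_or_eq_neg_and_eq_neg ha hab ha' with ⟨h, h'⟩ | ⟨h, h'⟩ <;> rw [h, h'] <;> simp

variable {w α β : K} {U V : GL (Fin 2) K}

theorem map_mem_closure_of_val_eq (hw : w ^ 2 = v) (hw0 : w ≠ 0) (hα : α ≠ 0) (hβ : β ≠ 0)
    (hU : (U : Matrix (Fin 2) (Fin 2) K) = reflMatrix v α β)
    (hV : (V : Matrix (Fin 2) (Fin 2) K) = rotMatrix w)
    (σ : K →+* K) (hσv : σ v = v)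
    (hσ : σ α ^ 2 = α ^ 2 ∧ σ α * σ β = α * β ∨
      σ α ^ 2 = (β / w) ^ 2 ∧ σ α * σ β = -(α * β))
    (φ : GL (Fin 2) K →* GL (Fin 2) K)
    (hφ : ∀ M, (φ M : Matrix (Fin 2) (Fin 2) K) = (M : Matrix (Fin 2) (Fin 2) K).map σ)
    {M : GL (Fin 2) K} (hM : M ∈ Subgroup.closure {U, V}) : φ M ∈ Subgroup.closure {U, V} := by
  set H := Subgroup.closure ({U, V} : Set (GL (Fin 2) K))
  have hU_mem : U ∈ H := Subgroup.subset_closure (by simp)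
  have hV_mem : V ∈ H := Subgroup.subset_closure (by simp)
  have hneg_mem {N : GL (Fin 2) K} (hN : N ∈ H) : -N ∈ H := by
    rw [← neg_one_mul, ← sq_eq_neg_one_of_val_eq_rotMatrix hV hw0]
    exact mul_mem (pow_mem hV_mem 2) hN
  have hφ_mem {N N' : GL (Fin 2) K} (hN' : N' ∈ H)
      (h : (N : Matrix (Fin 2) (Fin 2) K).map σ = N') : φ N ∈ H := by
    convert hN'
    exact Units.ext (by rw [hφ, h])
  have hUV : ((U * V : GL (Fin 2) K) : Matrix (Fin 2) (Fin 2) K) =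
      reflMatrix v (β / w) (-(α * w)) := by
    rw [Units.val_mul, hU, hV, reflMatrix_mul_rotMatrix hw]
  have hφV : φ V ∈ H := by
    rcases sq_eq_sq_iff_eq_or_eq_neg.1 (by rw [← map_pow, hw, hσv] : σ w ^ 2 = w ^ 2) with h | h
    · exact hφ_mem hV_mem (by rw [hV, map_rotMatrix, h])
    · exact hφ_mem (hneg_mem hV_mem)
        (by rw [hV, map_rotMatrix, h, rotMatrix_neg, Units.val_neg, hV])
  have hφU : φ U ∈ H := by
    rcases hσ with ⟨hσα, hσαβ⟩ | ⟨hσα, hσαβ⟩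
    · rcases map_reflMatrix_eq_or_eq_neg σ hσv hσα hσαβ hα with h | h
      · exact hφ_mem hU_mem (by rw [hU, h])
      · exact hφ_mem (hneg_mem hU_mem) (by rw [hU, h, Units.val_neg, hU])
    · have hσαβ' : σ α * σ β = β / w * -(α * w) := by rw [hσαβ]; field_simp
      rcases map_reflMatrix_eq_or_eq_neg σ hσv hσα hσαβ' (div_ne_zero hβ hw0) with h | h
      · exact hφ_mem (mul_mem hU_mem hV_mem) (by rw [hU, h, hUV])
      · exact hφ_mem (hneg_mem (mul_mem hU_mem hV_mem)) (by rw [hU, h, Units.val_neg, hUV])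
  have hle : H ≤ H.comap φ := by
    rw [Subgroup.closure_le, Set.insert_subset_iff, Set.singleton_subset_iff]
    exact ⟨hφU, hφV⟩
  exact hle hM

end Galois

section Parameters

variable {K : Type*} [Field K] {u v z s su sv α β : K}

lemma sq_add_sq_div_eq_one (h2 : (2 : K) ≠ 0) (hv : v ≠ 0) (hα : α ^ 2 = (1 - z * su) / 2)
    (hβ : β ^ 2 = v * (1 + z * su) / 2) : α ^ 2 + β ^ 2 / v = 1 := by
  rw [hα, hβ]; field_simp; ring

lemma mul_sq_eq_sq (hsu : su ^ 2 = u) (hid : 1 - z ^ 2 * u = s ^ 2 * (u * v))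
    (hα : α ^ 2 = (1 - z * su) / 2) (hβ : β ^ 2 = v * (1 + z * su) / 2) :
    (α * β) ^ 2 = (s * v * su / 2) ^ 2 := by
  rw [mul_pow, hα, hβ, div_pow, div_mul_div_comm, ← sq]
  congr 1
  linear_combination v * hid - (v * z ^ 2 + s ^ 2 * v ^ 2) * hsu

lemma map_sq_and_map_mul_eq (hv : v ≠ 0) (hsu : su ^ 2 = u) (hsv : sv ^ 2 = v)
    (hα : α ^ 2 = (1 - z * su) / 2) (hβ : β ^ 2 = v * (1 + z * su) / 2)
    (hαβ : (α * β) ^ 2 = (s * v * su / 2) ^ 2)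
    (σ : K →+* K) (hσu : σ u = u) (hσv : σ v = v) (hσz : σ z = z) (hσs : σ s = s) :
    σ α ^ 2 = α ^ 2 ∧ σ α * σ β = α * β ∨
      σ α ^ 2 = (β / sv) ^ 2 ∧ σ α * σ β = -(α * β) := by
  have hσα : σ α ^ 2 = (1 - z * σ su) / 2 := by
    rw [← map_pow, hα, map_div₀, map_sub, map_mul, hσz, map_one, map_ofNat]
  have hσαβ (t : K) (ht : σ su = t * su) : σ α * σ β = t * (α * β) := by
    rw [← map_mul]
    refine σ.map_eq_mul_of_sq_eq_sq hαβ ?_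
    rw [map_div₀, map_mul, map_mul, hσs, hσv, ht, map_ofNat]
    ring
  rcases sq_eq_sq_iff_eq_or_eq_neg.1 (show σ su ^ 2 = su ^ 2 by rw [← map_pow, hsu, hσu])
    with h | h
  · exact Or.inl ⟨by rw [hσα, h, hα], by rw [hσαβ 1 (by rw [h, one_mul]), one_mul]⟩
  · refine Or.inr ⟨?_, by rw [hσαβ (-1) (by rw [h, neg_one_mul]), neg_one_mul]⟩
    rw [hσα, h, div_pow, hsv, hβ]
    field_simp
    ring

end Parameters

theorem matrices_generate_galoisStable_D8_general {k : Type*} [Field k]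
    (hchar : (2 : k) ≠ 0)
    (u v : k) (hu : u ≠ 0) (hv : v ≠ 0)
    (z s : k) (hs : s ≠ 0) (hid : 1 - z ^ 2 * u = s ^ 2 * (u * v))
    (su sv α β : AlgebraicClosure k)
    (hsu : su ^ 2 = algebraMap k (AlgebraicClosure k) u)
    (hsv : sv ^ 2 = algebraMap k (AlgebraicClosure k) v)
    (hα : α ^ 2 = (1 - algebraMap k (AlgebraicClosure k) z * su) / 2)
    (hβ : β ^ 2 = algebraMap k (AlgebraicClosure k) v *
      (1 + algebraMap k (AlgebraicClosure k) z * su) / 2) :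
    IsUnit !![α, β; β / algebraMap k (AlgebraicClosure k) v, -α] ∧
    IsUnit !![(0 : AlgebraicClosure k), -sv; 1 / sv, 0] ∧
    ∃ U V : GL (Fin 2) (AlgebraicClosure k),
      (U : Matrix (Fin 2) (Fin 2) (AlgebraicClosure k)) =
        !![α, β; β / algebraMap k (AlgebraicClosure k) v, -α] ∧
      (V : Matrix (Fin 2) (Fin 2) (AlgebraicClosure k)) =
        !![0, -sv; 1 / sv, 0] ∧
      Nat.card (Subgroup.closure {U, V} : Subgroup (GL (Fin 2) (AlgebraicClosure k))) = 8 ∧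
      Nonempty ((Subgroup.closure {U, V} : Subgroup (GL (Fin 2) (AlgebraicClosure k))) ≃*
        DihedralGroup 4) ∧
      ∀ σ : Gk k, ∀ M ∈ Subgroup.closure {U, V}, galHom k σ M ∈ Subgroup.closure {U, V} := by
  set ι := algebraMap k (AlgebraicClosure k)
  have h2 : (2 : AlgebraicClosure k) ≠ 0 := fun h =>
    hchar (ι.injective (by rw [map_ofNat, h, map_zero]))
  have hv' : ι v ≠ 0 := (map_ne_zero ι).2 hv
  have hsu0 : su ≠ 0 := by rintro rfl; exact (map_ne_zero ι).2 hu (by rw [← hsu]; ring)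
  have hsv0 : sv ≠ 0 := by rintro rfl; exact hv' (by rw [← hsv]; ring)
  have hnorm := sq_add_sq_div_eq_one h2 hv' hα hβ
  have hαβ := mul_sq_eq_sq hsu (by simpa [ι] using congrArg ι hid) hα hβ
  have hαβ0 : α * β ≠ 0 := by
    rw [← pow_ne_zero_iff two_ne_zero, hαβ]
    exact pow_ne_zero 2 <|
      div_ne_zero (mul_ne_zero (mul_ne_zero ((map_ne_zero ι).2 hs) hv') hsu0) h2
  have hU : IsUnit (reflMatrix (ι v) α β) :=
    IsUnit.of_mul_eq_one _ (by rw [reflMatrix_mul_self, hnorm, one_smul])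
  have hV : IsUnit (rotMatrix sv) :=
    IsUnit.of_mul_eq_one (-rotMatrix sv) (by rw [mul_neg, rotMatrix_mul_self hsv0, neg_neg])
  obtain ⟨e⟩ := nonempty_mulEquiv_closure_of_val_eq h2 hsv hsv0 hnorm hU.unit_spec hV.unit_spec
  refine ⟨hU, hV, hU.unit, hV.unit, hU.unit_spec, hV.unit_spec,
    by rw [Nat.card_congr e.toEquiv, DihedralGroup.nat_card], ⟨e⟩, fun σ M hM => ?_⟩
  exact map_mem_closure_of_val_eq hsv hsv0 (left_ne_zero_of_mul hαβ0) (right_ne_zero_of_mul hαβ0)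
    hU.unit_spec hV.unit_spec σ (σ.commutes v)
    (map_sq_and_map_mul_eq hv' hsu hsv hα hβ hαβ σ (σ.commutes u) (σ.commutes v) (σ.commutes z)
      (σ.commutes s))
    (galHom k σ).toMonoidHom (fun _ => rfl) hM

/-- Proposition 3, converse half, of Cardona–Quer.
Let `u, v ∈ k*`, `z ∈ k`, `s ∈ k*` satisfy `1 − z²u = s²·uv`; fix square roots
`√u, √v ∈ k̄` and `α, β ∈ k̄` with `α² = (1−z√u)/2`, `β² = v(1+z√u)/2`.  Then the matrices
`U = [[α, β],[β/v, −α]]` and `V = [[0, −√v],[1/√v, 0]]` are invertible and generate a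
subgroup of `GL₂(k̄)` of order 8, isomorphic to `D8`, stable under the entrywise
Galois action. -/
theorem matrices_generate_galoisStable_D8 {k : Type*} [Field k] [PerfectField k]
    (hchar : (2 : k) ≠ 0)
    (u v : k) (hu : u ≠ 0) (hv : v ≠ 0)
    (z s : k) (hs : s ≠ 0) (hid : 1 - z ^ 2 * u = s ^ 2 * (u * v))
    (su sv α β : AlgebraicClosure k)
    (hsu : su ^ 2 = algebraMap k (AlgebraicClosure k) u)
    (hsv : sv ^ 2 = algebraMap k (AlgebraicClosure k) v)
    (hα : α ^ 2 = (1 - algebraMap k (AlgebraicClosure k) z * su) / 2)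
    (hβ : β ^ 2 = algebraMap k (AlgebraicClosure k) v *
      (1 + algebraMap k (AlgebraicClosure k) z * su) / 2) :
    IsUnit !![α, β; β / algebraMap k (AlgebraicClosure k) v, -α] ∧
    IsUnit !![(0 : AlgebraicClosure k), -sv; 1 / sv, 0] ∧
    ∃ U V : GL (Fin 2) (AlgebraicClosure k),
      (U : Matrix (Fin 2) (Fin 2) (AlgebraicClosure k)) =
        !![α, β; β / algebraMap k (AlgebraicClosure k) v, -α] ∧
      (V : Matrix (Fin 2) (Fin 2) (AlgebraicClosure k)) =
        !![0, -sv; 1 / sv, 0] ∧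
      Nat.card (Subgroup.closure {U, V} : Subgroup (GL (Fin 2) (AlgebraicClosure k))) = 8 ∧
      Nonempty ((Subgroup.closure {U, V} : Subgroup (GL (Fin 2) (AlgebraicClosure k))) ≃*
        DihedralGroup 4) ∧
      ∀ σ : Gk k, ∀ M ∈ Subgroup.closure {U, V}, galHom k σ M ∈ Subgroup.closure {U, V} :=
  matrices_generate_galoisStable_D8_general hchar u v hu hv z s hs hid su sv α β hsu hsv hα hβ

end
end

section
/- Let ρ be a G_k-group structure on D8 with associated fields K₁ and K₂, let v ∈ k* be such that K₂ = k(√v), and fix a square root √v ∈ k̄. Define Ξ : G_k → D8 by Ξ_σ = 1 if σ(√v) = √v and Ξ_σ = V otherwise; then Ξ is a 1-cocycle for ρ, i.e. Ξ_{στ} = Ξ_σ·ρ(σ)(Ξ_τ) for all σ, τ ∈ G_k. Moreover, there exists an element W ∈ D8 such that W⁻¹·Ξ_σ·ρ(σ)(W) ∈ {1, V²} for all σ ∈ G_k if and only if K₂ = k or K₂ = K₁. -/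
open IntermediateField DihedralGroup

noncomputable section

/-- Any automorphism of `D8` sending `V = r 1` to `r c` and `U = sr 0` to `sr j` is
completely determined. -/
lemma D8key (φ : MulAut (DihedralGroup 4)) (c j : ZMod 4)
    (hc : φ (r 1) = r c) (hj : φ (sr 0) = sr j) (i : ZMod 4) :
    φ (r i) = r (c * i) ∧ φ (sr i) = sr (j + c * i) := by
  have h4 : ∀ i : ZMod 4, i = 0 ∨ i = 1 ∨ i = 2 ∨ i = 3 := by decide
  have hr : ∀ i : ZMod 4, φ (r i) = r (c * i) := by
    intro i
    rcases h4 i with h|h|h|h <;> subst h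
    · rw [mul_zero, ← one_def, map_one]
    · rwa [mul_one]
    · have h2 : (r 2 : DihedralGroup 4) = r 1 * r 1 := by decide
      rw [h2, map_mul, hc, r_mul_r]
      congr 1; ring
    · have h3 : (r 3 : DihedralGroup 4) = r 1 * r 1 * r 1 := by decide
      rw [h3, map_mul, map_mul, hc, r_mul_r, r_mul_r]
      congr 1; ring
  refine ⟨hr i, ?_⟩
  have hs : (sr i : DihedralGroup 4) = sr 0 * r i := by rw [sr_mul_r, zero_add]
  rw [hs, map_mul, hj, hr, sr_mul_r]

/-- Lemma 5 of Cardona–Quer.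
Let `ρ` be a `G_k`-group structure on `D8` (realized as `DihedralGroup 4`, `U = sr 0`,
`V = r 1`) with `K₂ = k(√v)`.  The map `Ξ : G_k → D8` given by `Ξ_σ = 1` if `σ(√v) = √v`
and `Ξ_σ = V` otherwise is a 1-cocycle, and it is cohomologous to a 1-cocycle with values
in `⟨V²⟩ = {±1}` (i.e. there is `W ∈ D8` with `W⁻¹·Ξ_σ·ρ(σ)(W) ∈ {1, V²}` for all `σ`)
if and only if `K₂ = k` or `K₂ = K₁`. -/
theorem cocycle_Xi_D8 {k : Type*} [Field k] [PerfectField k]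
    (hchar : (2 : k) ≠ 0)
    (ρ : Gk k →* MulAut (DihedralGroup 4)) (hρ : IsGkGroupStructure k ρ)
    (v : k) (hv : v ≠ 0)
    (sv : AlgebraicClosure k)
    (hsv : sv ^ 2 = algebraMap k (AlgebraicClosure k) v)
    -- `K₂ = k(√v)`:
    (hK2 : ∀ σ : Gk k, ρ σ (r 1) = r 1 ↔ σ sv = sv)
    (Ξ : Gk k → DihedralGroup 4)
    (hΞ : ∀ σ : Gk k, (σ sv = sv → Ξ σ = 1) ∧ (σ sv ≠ sv → Ξ σ = r 1)) :
    -- `Ξ` is a 1-cocycle for `ρ`: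
    (∀ σ τ : Gk k, Ξ (σ * τ) = Ξ σ * ρ σ (Ξ τ)) ∧
    -- it is cohomologous to a cocycle with values in `{1, V²}` iff `K₂ = k` or `K₂ = K₁`:
    ((∃ W : DihedralGroup 4, ∀ σ : Gk k,
        W⁻¹ * Ξ σ * ρ σ W ∈ ({1, r 2} : Set (DihedralGroup 4))) ↔
      ((∀ σ : Gk k, σ sv = sv) ∨
        (∀ σ : Gk k, σ sv = sv ↔
          ∀ g : DihedralGroup 4, ρ σ g * g⁻¹ ∈ ({1, r 2} : Set (DihedralGroup 4))))) := by
  -- preliminary facts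
  have hsv0 : sv ≠ 0 := by
    intro h
    apply hv
    have : algebraMap k (AlgebraicClosure k) v = 0 := by rw [← hsv, h]; ring
    simpa using this
  have h2ne : (2 : AlgebraicClosure k) ≠ 0 := by
    intro h
    apply hchar
    have h2 : algebraMap k (AlgebraicClosure k) 2 = 0 := by rw [map_ofNat]; exact h
    exact (map_eq_zero _).mp h2
  have hnesv : -sv ≠ sv := by
    intro h
    have h0 : (2 : AlgebraicClosure k) * sv = 0 := by
      linear_combination -h
    rcases mul_eq_zero.mp h0 with h|h
    · exact h2ne h
    · exact hsv0 h
  have hfix : ∀ σ : Gk k, σ sv = sv ∨ σ sv = -sv := by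
    intro σ
    have h1 : σ sv * σ sv = sv * sv := by
      have : (σ sv) ^ 2 = sv ^ 2 := by
        rw [← map_pow, hsv, AlgEquiv.commutes]
      rw [sq, sq] at this
      exact this
    exact mul_self_eq_mul_self_iff.mp h1
  have hC : ∀ σ : Gk k, σ sv ≠ sv → ρ σ (r 1) = r 3 := by
    intro σ h
    have h1 : ρ σ (r 1) ≠ r 1 := fun he => h ((hK2 σ).1 he)
    have h2 : ρ σ (r 1) * ρ σ (r 1) ≠ 1 := by
      rw [← map_mul, ← map_one (ρ σ)]
      exact fun he => (by decide : (r 1 * r 1 : DihedralGroup 4) ≠ 1) ((ρ σ).injective he)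
    revert h1 h2
    generalize ρ σ (r 1) = a
    revert a
    decide
  have hD : ∀ σ : Gk k, ∃ j : ZMod 4, ρ σ (sr 0) = sr j := by
    intro σ
    have hb1 : ρ σ (sr 0) * ρ σ (sr 0) = 1 := by
      rw [← map_mul, DihedralGroup.sr_mul_self, map_one]
    have hb2 : ρ σ (sr 0) ≠ 1 := by
      rw [← map_one (ρ σ)]
      exact fun he => (by decide : (sr 0 : DihedralGroup 4) ≠ 1) ((ρ σ).injective he)
    have hb3 : ρ σ (sr 0) ≠ r 2 := by
      have hc12 : ρ σ (r 1) = r 1 ∨ ρ σ (r 1) = r 3 := by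
        by_cases hσ : σ sv = sv
        · exact Or.inl ((hK2 σ).2 hσ)
        · exact Or.inr (hC σ hσ)
      have hmul : ρ σ (r 1) * ρ σ (r 1) = ρ σ (r 2) := by
        rw [← map_mul]
        congr 1
      have h2 : ρ σ (r 2) = r 2 := by
        rcases hc12 with h|h <;> rw [← hmul, h] <;> decide
      intro he
      exact (by decide : (sr 0 : DihedralGroup 4) ≠ r 2)
        ((ρ σ).injective (he.trans h2.symm))
    revert hb1 hb2 hb3
    generalize ρ σ (sr 0) = b
    revert b
    decide
  constructor
  · -- the cocycle condition
    intro σ τ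
    have hcomp : (σ * τ) sv = σ (τ sv) := rfl
    rcases hfix σ with hσ | hσ <;> rcases hfix τ with hτ | hτ
    · have h1 : (σ * τ) sv = sv := by rw [hcomp, hτ, hσ]
      rw [(hΞ _).1 h1, (hΞ σ).1 hσ, (hΞ τ).1 hτ, map_one, one_mul]
    · have h1 : (σ * τ) sv ≠ sv := by
        rw [hcomp, hτ, map_neg, hσ]
        exact hnesv
      have hτ' : τ sv ≠ sv := by rw [hτ]; exact hnesv
      rw [(hΞ _).2 h1, (hΞ σ).1 hσ, (hΞ τ).2 hτ', (hK2 σ).2 hσ, one_mul]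
    · have h1 : (σ * τ) sv ≠ sv := by
        rw [hcomp, hτ, hσ]
        exact hnesv
      have hσ' : σ sv ≠ sv := by rw [hσ]; exact hnesv
      rw [(hΞ _).2 h1, (hΞ σ).2 hσ', (hΞ τ).1 hτ, map_one, mul_one]
    · have h1 : (σ * τ) sv = sv := by rw [hcomp, hτ, map_neg, hσ, neg_neg]
      have hσ' : σ sv ≠ sv := by rw [hσ]; exact hnesv
      have hτ' : τ sv ≠ sv := by rw [hτ]; exact hnesv
      rw [(hΞ _).1 h1, (hΞ σ).2 hσ', (hΞ τ).2 hτ', hC σ hσ']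
      decide
  · constructor
    · -- forward direction
      rintro ⟨W, hW⟩
      by_cases hP : ∀ σ : Gk k, σ sv = sv
      · exact Or.inl hP
      right
      push_neg at hP
      obtain ⟨σ₀, hσ₀⟩ := hP
      obtain ⟨j₀, hj₀⟩ := hD σ₀
      have hW' : ∃ m, W = sr m := by
        rcases W with m | m
        · exfalso
          have h1 := hW σ₀
          rw [(hΞ σ₀).2 hσ₀, (D8key (ρ σ₀) 3 j₀ (hC σ₀ hσ₀) hj₀ m).1] at h1
          simp only [Set.mem_insert_iff, Set.mem_singleton_iff] at h1
          exact (by decide : ∀ m : ZMod 4,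
            ¬((r m)⁻¹ * r 1 * r (3 * m) = 1 ∨ (r m)⁻¹ * r 1 * r (3 * m) = r 2)) m h1
        · exact ⟨m, rfl⟩
      obtain ⟨m, rfl⟩ := hW'
      intro σ
      obtain ⟨j, hj⟩ := hD σ
      rcases hfix σ with hσ | hσ
      · -- σ fixes √v
        have hk := D8key (ρ σ) 1 j ((hK2 σ).2 hσ) hj
        have h1 := hW σ
        rw [(hΞ σ).1 hσ, (hk m).2] at h1
        simp only [Set.mem_insert_iff, Set.mem_singleton_iff] at h1
        have hj02 : j = 0 ∨ j = 2 :=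
          (by decide : ∀ j m : ZMod 4,
            ((sr m)⁻¹ * 1 * sr (j + 1 * m) = 1 ∨ (sr m)⁻¹ * 1 * sr (j + 1 * m) = r 2) →
              (j = 0 ∨ j = 2)) j m h1
        constructor
        · intro _ g
          simp only [Set.mem_insert_iff, Set.mem_singleton_iff]
          rcases g with i | i
          · rw [(hk i).1]
            exact (by decide : ∀ i : ZMod 4,
              r (1 * i) * (r i)⁻¹ = 1 ∨ r (1 * i) * (r i)⁻¹ = r 2) i
          · rw [(hk i).2]
            rcases hj02 with h|h <;> subst h
            · exact (by decide : ∀ i : ZMod 4,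
                sr (0 + 1 * i) * (sr i)⁻¹ = 1 ∨ sr (0 + 1 * i) * (sr i)⁻¹ = r 2) i
            · exact (by decide : ∀ i : ZMod 4,
                sr (2 + 1 * i) * (sr i)⁻¹ = 1 ∨ sr (2 + 1 * i) * (sr i)⁻¹ = r 2) i
        · intro _
          exact hσ
      · -- σ does not fix √v
        have hσ' : σ sv ≠ sv := by rw [hσ]; exact hnesv
        have hk := D8key (ρ σ) 3 j (hC σ hσ') hj
        have h1 := hW σ
        rw [(hΞ σ).2 hσ', (hk m).2] at h1
        simp only [Set.mem_insert_iff, Set.mem_singleton_iff] at h1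
        have hj13 : j = 1 ∨ j = 3 :=
          (by decide : ∀ j m : ZMod 4,
            ((sr m)⁻¹ * r 1 * sr (j + 3 * m) = 1 ∨ (sr m)⁻¹ * r 1 * sr (j + 3 * m) = r 2) →
              (j = 1 ∨ j = 3)) j m h1
        constructor
        · intro h
          exact absurd h hσ'
        · intro hall
          exfalso
          have h2 := hall (sr 0)
          rw [(hk 0).2] at h2
          simp only [Set.mem_insert_iff, Set.mem_singleton_iff] at h2
          rcases hj13 with h|h <;> subst h <;> revert h2 <;> decide
    · -- backward direction
      rintro (hP | hQ)
      · refine ⟨1, fun σ => ?_⟩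
        rw [(hΞ σ).1 (hP σ), map_one]
        simp
      · refine ⟨sr 0, fun σ => ?_⟩
        obtain ⟨j, hj⟩ := hD σ
        simp only [Set.mem_insert_iff, Set.mem_singleton_iff]
        rcases hfix σ with hσ | hσ
        · have h2 := (hQ σ).1 hσ (sr 0)
          rw [hj] at h2
          simp only [Set.mem_insert_iff, Set.mem_singleton_iff] at h2
          have hj02 : j = 0 ∨ j = 2 :=
            (by decide : ∀ j : ZMod 4,
              (sr j * (sr 0)⁻¹ = 1 ∨ sr j * (sr 0)⁻¹ = r 2) → (j = 0 ∨ j = 2)) j h2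
          rw [(hΞ σ).1 hσ, hj]
          rcases hj02 with h|h <;> subst h <;> decide
        · have hσ' : σ sv ≠ sv := by rw [hσ]; exact hnesv
          have hk := D8key (ρ σ) 3 j (hC σ hσ') hj
          have hnall : ¬ ∀ g : DihedralGroup 4,
              ρ σ g * g⁻¹ ∈ ({1, r 2} : Set (DihedralGroup 4)) :=
            fun h => hσ' ((hQ σ).2 h)
          have hj13 : j = 1 ∨ j = 3 := by
            by_contra hcon
            apply hnall
            intro g
            simp only [Set.mem_insert_iff, Set.mem_singleton_iff]
            have hj02 : j = 0 ∨ j = 2 :=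
              (by decide : ∀ j : ZMod 4, ¬(j = 1 ∨ j = 3) → (j = 0 ∨ j = 2)) j hcon
            rcases g with i | i
            · rw [(hk i).1]
              exact (by decide : ∀ i : ZMod 4,
                r (3 * i) * (r i)⁻¹ = 1 ∨ r (3 * i) * (r i)⁻¹ = r 2) i
            · rw [(hk i).2]
              rcases hj02 with h|h <;> subst h
              · exact (by decide : ∀ i : ZMod 4,
                  sr (0 + 3 * i) * (sr i)⁻¹ = 1 ∨ sr (0 + 3 * i) * (sr i)⁻¹ = r 2) i
              · exact (by decide : ∀ i : ZMod 4,
                  sr (2 + 3 * i) * (sr i)⁻¹ = 1 ∨ sr (2 + 3 * i) * (sr i)⁻¹ = r 2) i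
          rw [(hΞ σ).2 hσ', hj]
          rcases hj13 with h|h <;> subst h <;> decide

end
end

section
/- Let a, b ∈ k with a ≠ 0 and suppose the polynomial f = X³ − aX − b is irreducible over k; let K₃ ⊆ k̄ be its splitting field and set v = 4a³ − 27b² (which is nonzero). Let u ∈ k* be such that ℍ[k,u,−3v] ≅ M₂(k). Then there exists z ∈ k such that K₃ is the splitting field over k of the polynomial X³ − (3u/4)X − z/4. -/
/-!
A split quaternion algebra contains a nonzero square-zero element; it is a pure quaternion, and its
coordinates write `u = s² + 3vt²` as a norm from `k(√(-3v))`. For a root `θ` of `f`, such a norm is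
exactly what allows choosing `x, y, w ∈ k` so that `ξ = xθ + yθ² - w` has trace zero (`3w = 2ay`)
and characteristic polynomial `X³ - (3u/4)X - z/4`. Because `f` has no root in `k`, `θ` is in turn a
polynomial in `ξ`, so `k(ξ) = k(θ)`, and generators of the same cubic field have minimal polynomials
with the same splitting field.
-/

open Polynomial Quaternion IntermediateField

theorem exists_ne_zero_mul_self_eq_zero_of_ringEquiv_matrix {A R : Type*} [Ring A] [Ring R]
    [Nontrivial R] (φ : A ≃+* Matrix (Fin 2) (Fin 2) R) : ∃ ε : A, ε ≠ 0 ∧ ε * ε = 0 := by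
  refine ⟨φ.symm (Matrix.single 0 1 1), ?_, ?_⟩
  · rw [EmbeddingLike.map_ne_zero_iff]
    intro h
    simpa using congrFun (congrFun h 0) 1
  · rw [← map_mul, Matrix.single_mul_single_of_ne (1 : R) (0 : Fin 2) 1 0 (by decide) 1, map_zero]

namespace QuaternionAlgebra

section NoZeroDivisors

variable {R : Type*} [CommRing R] [NoZeroDivisors R] {a b : R}

theorem re_eq_zero_of_mul_self_eq_zero (h2 : (2 : R) ≠ 0) {ε : ℍ[R,a,b]} (h : ε * ε = 0) :
    ε.re = 0 := by
  have hre := congrArg re h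
  have hI := congrArg imI h
  have hJ := congrArg imJ h
  have hK := congrArg imK h
  simp only [re_mul, imI_mul, imJ_mul, imK_mul, re_zero, imI_zero, imJ_zero, imK_zero]
    at hre hI hJ hK
  have half (c : R) (hc : 2 * c = 0) : c = 0 := (mul_eq_zero.1 hc).resolve_left h2
  have hI' := half (ε.re * ε.imI) (by linear_combination hI)
  have hJ' := half (ε.re * ε.imJ) (by linear_combination hJ)
  have hK' := half (ε.re * ε.imK) (by linear_combination hK)
  exact pow_eq_zero_iff three_ne_zero |>.1 <| by
    linear_combination ε.re * hre - a * ε.imI * hI' - b * ε.imJ * hJ' + a * b * ε.imK * hK'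

theorem isotropic_im_of_mul_self_eq_zero (h2 : (2 : R) ≠ 0) {ε : ℍ[R,a,b]} (h : ε * ε = 0) :
    a * ε.imI ^ 2 + b * ε.imJ ^ 2 - a * b * ε.imK ^ 2 = 0 := by
  have hre := congrArg re h
  simp only [re_mul, re_zero] at hre
  linear_combination hre - ε.re * re_eq_zero_of_mul_self_eq_zero h2 h

end NoZeroDivisors

theorem exists_eq_sq_sub_mul_sq_of_algEquiv_matrix {R : Type*} [Field R] {a b : R}
    (h2 : (2 : R) ≠ 0) (hb : b ≠ 0) (φ : ℍ[R,a,b] ≃ₐ[R] Matrix (Fin 2) (Fin 2) R) :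
    ∃ s t : R, a = s ^ 2 - b * t ^ 2 := by
  by_cases hsq : IsSquare b
  · obtain ⟨σ, rfl⟩ := hsq
    have hσ : σ ≠ 0 := by rintro rfl; simp at hb
    exact ⟨(a + 1) / 2, (a - 1) / (2 * σ), by field_simp; ring⟩
  obtain ⟨ε, hε0, hε⟩ := exists_ne_zero_mul_self_eq_zero_of_ringEquiv_matrix φ.toRingEquiv
  have hre := re_eq_zero_of_mul_self_eq_zero h2 hε
  have hiso := isotropic_im_of_mul_self_eq_zero h2 hε
  have hn : ε.imI ^ 2 - b * ε.imK ^ 2 ≠ 0 := by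
    intro hn
    have hK : ε.imK = 0 := by
      by_contra hK
      exact hsq ⟨ε.imI / ε.imK, by field_simp; linear_combination -hn⟩
    have hI : ε.imI = 0 := pow_eq_zero_iff two_ne_zero |>.1 <| by
      linear_combination hn + b * ε.imK * hK
    have hJ : ε.imJ = 0 := pow_eq_zero_iff two_ne_zero |>.1 <|
      (mul_eq_zero.1 (by linear_combination hiso - a * ε.imI * hI + a * b * ε.imK * hK :
        b * ε.imJ ^ 2 = 0)).resolve_left hb
    exact hε0 (QuaternionAlgebra.ext hre hI hJ hK)
  refine ⟨b * ε.imJ * ε.imK / (ε.imI ^ 2 - b * ε.imK ^ 2),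
    ε.imJ * ε.imI / (ε.imI ^ 2 - b * ε.imK ^ 2), ?_⟩
  field_simp
  linear_combination (ε.imI ^ 2 - b * ε.imK ^ 2) * hiso

end QuaternionAlgebra

theorem natDegree_depressed_cubic {R : Type*} [CommRing R] [Nontrivial R] (p q : R) :
    (X ^ 3 - C p * X - C q).natDegree = 3 := by
  compute_degree!

theorem monic_depressed_cubic {R : Type*} [CommRing R] (p q : R) :
    (X ^ 3 - C p * X - C q).Monic := by
  monicity!

section Cubic

variable {k : Type*} [Field k] {a b : k}

theorem cubic_ne_zero_of_irreducible (h : Irreducible (X ^ 3 - C a * X - C b)) (r : k) :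
    r ^ 3 - a * r - b ≠ 0 := by
  simpa using
    h.not_isRoot_of_natDegree_ne_one (by rw [natDegree_depressed_cubic]; decide) (x := r)

theorem discr_ne_zero_of_cubic_ne_zero (h2 : (2 : k) ≠ 0) (ha : a ≠ 0)
    (hroot : ∀ r, r ^ 3 - a * r - b ≠ 0) : 4 * a ^ 3 - 27 * b ^ 2 ≠ 0 := by
  intro hv
  apply hroot (-(3 * b) / (2 * a))
  field_simp
  linear_combination b * hv

theorem exists_tschirnhaus_coeffs (h2 : (2 : k) ≠ 0) (ha : a ≠ 0) {u s t : k}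
    (hu : u = s ^ 2 + 3 * (4 * a ^ 3 - 27 * b ^ 2) * t ^ 2) :
    ∃ x y w : k, 3 * w = 2 * a * y ∧ 4 * a * x ^ 2 + 12 * b * x * y + 2 * a * w * y = 3 * u := by
  refine ⟨-3 * a * t, (27 * b * t + 3 * s) / (2 * a), 9 * b * t + s, ?_, ?_⟩
  · field_simp
    ring
  · field_simp
    linear_combination -6 * hu

theorem homogenized_cubic_ne_zero (h3 : (3 : k) ≠ 0) {u x y w : k} (hu0 : u ≠ 0)
    (hroot : ∀ r, r ^ 3 - a * r - b ≠ 0)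
    (hu : 4 * a * x ^ 2 + 12 * b * x * y + 2 * a * w * y = 3 * u) :
    x ^ 3 - a * x * y ^ 2 - b * y ^ 3 ≠ 0 := by
  intro hD
  by_cases hy : y = 0
  · subst hy
    have hx : x = 0 := pow_eq_zero_iff three_ne_zero |>.1 (by linear_combination hD)
    subst hx
    exact hu0 ((mul_eq_zero.1 (by linear_combination -hu : 3 * u = 0)).resolve_left h3)
  · exact hroot (x / y) (by field_simp; linear_combination hD)

end Cubic

section TschirnhausIdentities

variable {R : Type*} [CommRing R] {a b u x y w θ : R}

theorem tschirnhaus_cube (hθ : θ ^ 3 = a * θ + b) (hw : 3 * w = 2 * a * y)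
    (hu : 4 * a * x ^ 2 + 12 * b * x * y + 2 * a * w * y = 3 * u) :
    4 * (x * θ + y * θ ^ 2 - w) ^ 3 = 3 * u * (x * θ + y * θ ^ 2 - w) +
      (3 * u * w + 4 * b ^ 2 * y ^ 3 - 4 * w ^ 3 - 4 * a * b * x * y ^ 2 + 4 * b * x ^ 3) := by
  linear_combination
    (4 * y ^ 3 * θ ^ 3 + 12 * x * y ^ 2 * θ ^ 2
      + (4 * a * y ^ 3 + 12 * x ^ 2 * y - 12 * y ^ 2 * w) * θ + 4 * x ^ 3 + 12 * a * x * y ^ 2 - 24 * x * y * w + 4 * y ^ 3 * b) * hθ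
    + (x * θ + y * θ ^ 2) * hu
    + (4 * w * y * θ ^ 2 - 2 * a * y ^ 2 * θ ^ 2 - 4 * b * y ^ 2 * θ + 4 * w * x * θ
      - 6 * a * x * y * θ - 4 * x ^ 2 * θ ^ 2 - 8 * b * x * y) * hw

theorem tschirnhaus_inverse (hθ : θ ^ 3 = a * θ + b) (hw : 3 * w = 2 * a * y) :
    9 * (x ^ 3 - a * x * y ^ 2 - b * y ^ 3) * θ = 6 * a * x ^ 2 * y + 2 * a ^ 2 * y ^ 3 +
      18 * b * x * y ^ 2 + (9 * x ^ 2 - 3 * a * y ^ 2) * (x * θ + y * θ ^ 2 - w) -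
      9 * y * (x * θ + y * θ ^ 2 - w) ^ 2 := by
  linear_combination (9 * y ^ 3 * θ + 18 * x * y ^ 2) * hθ
    + (3 * y * w - 6 * y ^ 2 * θ ^ 2 + a * y ^ 2 - 6 * x * y * θ + 3 * x ^ 2) * hw

end TschirnhausIdentities

section Adjoin

variable {k L : Type*} [Field k] [Field L] [Algebra k L]

theorem aeval_mem_adjoin_simple (p : k[X]) (ξ : L) : aeval ξ p ∈ k⟮ξ⟯ :=
  algebra_adjoin_le_adjoin k {ξ} (aeval_mem_adjoin_singleton k ξ)

theorem mem_adjoin_simple_of_algebraMap_mul_eq_aeval {θ ξ : L} {c : k} (hc : c ≠ 0) {p : k[X]}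
    (h : algebraMap k L c * θ = aeval ξ p) : θ ∈ k⟮ξ⟯ := by
  have hθ : θ = c⁻¹ • aeval ξ p := by
    rw [← h, Algebra.smul_def, ← mul_assoc, ← map_mul, inv_mul_cancel₀ hc, map_one, one_mul]
  exact hθ ▸ smul_mem _ (aeval_mem_adjoin_simple p ξ)

theorem mem_of_aeval_minpoly_eq_zero (E : IntermediateField k L) [Normal k E] {t r : L}
    (ht : t ∈ E) (hr : aeval r (minpoly k t) = 0) : r ∈ E := by
  set t' : E := ⟨t, ht⟩
  have hr' : r ∈ (minpoly k t').rootSet L := by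
    rw [mem_rootSet, minpoly_eq]
    exact ⟨minpoly.ne_zero (isIntegral_iff.1 (Algebra.IsIntegral.isIntegral t')), hr⟩
  rw [← (Normal.splits ‹_› t').image_rootSet E.val] at hr'
  obtain ⟨s, -, rfl⟩ := hr'
  exact s.2

theorem adjoin_rootSet_minpoly_le {θ ξ : L} (hθ : IsIntegral k θ)
    (hsplit : ((minpoly k θ).map (algebraMap k L)).Splits) (hξ : ξ ∈ k⟮θ⟯) :
    adjoin k ((minpoly k ξ).rootSet L) ≤ adjoin k ((minpoly k θ).rootSet L) := by
  set E := adjoin k ((minpoly k θ).rootSet L)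
  have : IsSplittingField k E (minpoly k θ) := adjoin_rootSet_isSplittingField hsplit
  have : Normal k E := Normal.of_isSplittingField (minpoly k θ)
  have hθE : θ ∈ E := subset_adjoin _ _ <| by
    rw [mem_rootSet]
    exact ⟨minpoly.ne_zero hθ, minpoly.aeval k θ⟩
  rw [adjoin_le_iff]
  exact fun r hr => mem_of_aeval_minpoly_eq_zero E (adjoin_simple_le_iff.2 hθE hξ)
    (mem_rootSet.1 hr).2

theorem minpoly_eq_of_adjoin_simple_eq {θ ξ : L} (hθ : IsIntegral k θ) (h : k⟮θ⟯ = k⟮ξ⟯)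
    {g : k[X]} (hg : g.Monic) (hgξ : aeval ξ g = 0)
    (hdeg : g.natDegree ≤ (minpoly k θ).natDegree) : minpoly k ξ = g := by
  have hξ : IsIntegral k ξ := ⟨g, hg, hgξ⟩
  have hfinrank : (minpoly k ξ).natDegree = (minpoly k θ).natDegree := by
    rw [← adjoin.finrank hξ, ← adjoin.finrank hθ, h]
  exact (eq_of_monic_of_dvd_of_natDegree_le (minpoly.monic hξ) hg (minpoly.dvd k ξ hgξ)
    (hfinrank ▸ hdeg)).symm

theorem adjoin_rootSet_eq_of_adjoin_simple_eq [IsAlgClosed L] {f g : k[X]} (hf : Irreducible f)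
    (hfm : f.Monic) (hgm : g.Monic) (hdeg : g.natDegree = f.natDegree) {θ ξ : L}
    (hθ : aeval θ f = 0) (hξ : aeval ξ g = 0) (h : k⟮θ⟯ = k⟮ξ⟯) :
    adjoin k (g.rootSet L) = adjoin k (f.rootSet L) := by
  have hfθ : minpoly k θ = f := (minpoly.eq_of_irreducible_of_monic hf hθ hfm).symm
  have hgξ : minpoly k ξ = g :=
    minpoly_eq_of_adjoin_simple_eq ⟨f, hfm, hθ⟩ h hgm hξ (by rw [hfθ, hdeg])
  rw [← hfθ, ← hgξ]
  exact le_antisymm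
    (adjoin_rootSet_minpoly_le ⟨f, hfm, hθ⟩ (IsAlgClosed.splits _)
      (h ▸ mem_adjoin_simple_self k ξ))
    (adjoin_rootSet_minpoly_le ⟨g, hgm, hξ⟩ (IsAlgClosed.splits _)
      (h ▸ mem_adjoin_simple_self k θ))

end Adjoin

section TschirnhausTransform

variable {k L : Type*} [Field k] [Field L] [Algebra k L] {a b x y w : k} {θ : L}

theorem aeval_tschirnhaus_eq_zero (h2 : (2 : k) ≠ 0) {u : k}
    (hθ : aeval θ (X ^ 3 - C a * X - C b) = 0) (hw : 3 * w = 2 * a * y)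
    (hu : 4 * a * x ^ 2 + 12 * b * x * y + 2 * a * w * y = 3 * u) :
    aeval (aeval θ (C x * X + C y * X ^ 2 - C w)) (X ^ 3 - C (3 * u / 4) * X -
      C ((3 * u * w + 4 * b ^ 2 * y ^ 3 - 4 * w ^ 3 - 4 * a * b * x * y ^ 2 + 4 * b * x ^ 3) / 4)) =
      0 := by
  have h4L : (4 : L) ≠ 0 := by
    rw [← map_ofNat (algebraMap k L) 4]
    exact (_root_.map_ne_zero _).2 (by simpa [show (4 : k) = 2 ^ 2 by norm_num] using h2)
  apply_fun algebraMap k L at hw hu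
  simp only [map_mul, map_add, map_pow, map_ofNat] at hw hu
  simp only [map_sub, map_add, map_mul, map_pow, aeval_X, aeval_C] at hθ ⊢
  have key := tschirnhaus_cube (θ := θ) (a := algebraMap k L a) (b := algebraMap k L b)
    (x := algebraMap k L x) (by linear_combination hθ) hw hu
  simp only [map_div₀, map_sub, map_add, map_mul, map_pow, map_ofNat]
  field_simp
  linear_combination key

theorem mem_adjoin_simple_tschirnhaus (h3 : (3 : k) ≠ 0)
    (hθ : aeval θ (X ^ 3 - C a * X - C b) = 0) (hw : 3 * w = 2 * a * y)
    (hD : x ^ 3 - a * x * y ^ 2 - b * y ^ 3 ≠ 0) :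
    θ ∈ k⟮aeval θ (C x * X + C y * X ^ 2 - C w)⟯ := by
  have h9 : (9 : k) ≠ 0 := by simpa [show (9 : k) = 3 ^ 2 by norm_num] using h3
  refine mem_adjoin_simple_of_algebraMap_mul_eq_aeval (mul_ne_zero h9 hD)
    (p := C (6 * a * x ^ 2 * y + 2 * a ^ 2 * y ^ 3 + 18 * b * x * y ^ 2) +
      C (9 * x ^ 2 - 3 * a * y ^ 2) * X - C (9 * y) * X ^ 2) ?_
  apply_fun algebraMap k L at hw
  simp only [map_mul, map_ofNat] at hw
  simp only [map_sub, map_add, map_mul, map_pow, aeval_X, aeval_C, map_ofNat] at hθ ⊢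
  linear_combination tschirnhaus_inverse (θ := θ) (a := algebraMap k L a) (b := algebraMap k L b)
    (x := algebraMap k L x) (by linear_combination hθ) hw

end TschirnhausTransform

theorem cubic_splitting_field_of_quaternion_split_general {k : Type*} [Field k]
    (hchar2 : (2 : k) ≠ 0) (hchar3 : (3 : k) ≠ 0)
    (a b : k) (ha : a ≠ 0) (hirr : Irreducible (X ^ 3 - C a * X - C b))
    (u : k) (hu : u ≠ 0)
    (hsplit : Nonempty (ℍ[k, u, -3 * (4 * a ^ 3 - 27 * b ^ 2)] ≃ₐ[k]
        Matrix (Fin 2) (Fin 2) k)) :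
    4 * a ^ 3 - 27 * b ^ 2 ≠ 0 ∧
      ∃ z : k,
        IntermediateField.adjoin k
            ((X ^ 3 - C (3 * u / 4) * X - C (z / 4)).rootSet (AlgebraicClosure k)) =
          IntermediateField.adjoin k
            ((X ^ 3 - C a * X - C b).rootSet (AlgebraicClosure k)) := by
  have hroot := cubic_ne_zero_of_irreducible hirr
  have hv := discr_ne_zero_of_cubic_ne_zero hchar2 ha hroot
  refine ⟨hv, ?_⟩
  obtain ⟨s, t, hst⟩ := QuaternionAlgebra.exists_eq_sq_sub_mul_sq_of_algEquiv_matrix hchar2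
    (mul_ne_zero (neg_ne_zero.2 hchar3) hv) hsplit.some
  obtain ⟨x, y, w, hw, hxy⟩ := exists_tschirnhaus_coeffs hchar2 ha
    (by linear_combination hst : u = s ^ 2 + 3 * (4 * a ^ 3 - 27 * b ^ 2) * t ^ 2)
  obtain ⟨θ, hθ⟩ := IsAlgClosed.exists_aeval_eq_zero (AlgebraicClosure k) _
    (degree_pos_of_irreducible hirr).ne'
  have hξ := aeval_tschirnhaus_eq_zero hchar2 hθ hw hxy
  refine ⟨_, adjoin_rootSet_eq_of_adjoin_simple_eq hirr (monic_depressed_cubic a b)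
    (monic_depressed_cubic _ _) (by rw [natDegree_depressed_cubic, natDegree_depressed_cubic])
    hθ hξ (le_antisymm ?_ ?_)⟩
  · exact adjoin_simple_le_iff.2 <| mem_adjoin_simple_tschirnhaus hchar3 hθ hw <|
      homogenized_cubic_ne_zero hchar3 hu hroot hxy
  · exact adjoin_simple_le_iff.2 (aeval_mem_adjoin_simple _ θ)

/-- Let `f = X³ − aX − b` (with `a ≠ 0`) be irreducible over a perfect field `k` of
characteristic `≠ 2, 3`, with splitting field `K₃ ⊆ k̄` and discriminant-related quantity
`v = 4a³ − 27b²` (nonzero).  If `u ∈ k*` is such that `ℍ[k, u, −3v]` is split, then `K₃`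
is also the splitting field over `k` of a polynomial `X³ − (3u/4)X − z/4` for some `z ∈ k`. -/
theorem cubic_splitting_field_of_quaternion_split {k : Type*} [Field k] [PerfectField k]
    (hchar2 : (2 : k) ≠ 0) (hchar3 : (3 : k) ≠ 0)
    (a b : k) (ha : a ≠ 0) (hirr : Irreducible (X ^ 3 - C a * X - C b))
    (u : k) (hu : u ≠ 0)
    (hsplit : Nonempty (ℍ[k, u, -3 * (4 * a ^ 3 - 27 * b ^ 2)] ≃ₐ[k]
        Matrix (Fin 2) (Fin 2) k)) :
    4 * a ^ 3 - 27 * b ^ 2 ≠ 0 ∧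
      ∃ z : k,
        IntermediateField.adjoin k
            ((X ^ 3 - C (3 * u / 4) * X - C (z / 4)).rootSet (AlgebraicClosure k)) =
          IntermediateField.adjoin k
            ((X ^ 3 - C a * X - C b).rootSet (AlgebraicClosure k)) :=
  cubic_splitting_field_of_quaternion_split_general hchar2 hchar3 a b ha hirr u hu hsplit
end
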